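/- arXiv:2303.07561 — 4 statements merged into one kernel-verified Lean document; each statement's English description precedes it below -/
import Mathlib

section
/- Given partitions P = {p₀ < ⋯ < p_s} of [a₁, b₁] and Q = {q₀ < ⋯ < q_t} of [a₂, b₂], there exists a strong partition 𝔓 of [α, β]_𝕜 (α = a₁e₁ + a₂e₂, β = b₁e₁ + b₂e₂) whose idempotent projections satisfy 𝔓_{e₁} = P and 𝔓_{e₂} = Q. -/
/-- The hyperbolic partial order on `𝕂 ≅ ℝ × ℝ`. -/
def hle (x y : ℝ × ℝ) : Prop := x.1 ≤ y.1 ∧ x.2 ≤ y.2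

/-- `ρ 0, ρ 1, …, ρ n` is a strong partition of `[α, β]_𝕜`: a `⪯`-chain of
pairwise distinct points starting at `α` and ending at `β`. -/
def IsStrongPartition (ρ : ℕ → ℝ × ℝ) (n : ℕ) (α β : ℝ × ℝ) : Prop :=
  ρ 0 = α ∧ ρ n = β ∧ (∀ j < n, hle (ρ j) (ρ (j + 1))) ∧
    ∀ i ≤ n, ∀ j ≤ n, i ≠ j → ρ i ≠ ρ j

lemma strict_chain {s : ℕ} {p : ℕ → ℝ} (h : ∀ i < s, p i < p (i + 1)) :
    ∀ j ≤ s, ∀ i < j, p i < p j := by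
  intro j hj
  induction j with
  | zero => intro i hi; omega
  | succ k ih =>
    intro i hi
    have hk : p k < p (k + 1) := h k (by omega)
    rcases Nat.lt_succ_iff_lt_or_eq.mp hi with h' | h'
    · exact lt_trans (ih (by omega) i h') hk
    · subst h'; exact hk

/-- Given real partitions `P = {p₀ < ⋯ < p_s}` of `[a₁, b₁]` and
`Q = {q₀ < ⋯ < q_t}` of `[a₂, b₂]`, there is a strong partition of
`[α, β]_𝕜` whose idempotent projections are exactly `P` and `Q`. -/
theorem exists_strong_partition_with_projections
    (a₁ b₁ a₂ b₂ : ℝ) (s t : ℕ) (p q : ℕ → ℝ)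
    (hp0 : p 0 = a₁) (hps : p s = b₁) (hpmono : ∀ i < s, p i < p (i + 1))
    (hq0 : q 0 = a₂) (hqt : q t = b₂) (hqmono : ∀ i < t, q i < q (i + 1)) :
    ∃ (n : ℕ) (ρ : ℕ → ℝ × ℝ),
      IsStrongPartition ρ n (a₁, a₂) (b₁, b₂) ∧
      {x | ∃ j ≤ n, (ρ j).1 = x} = {x | ∃ i ≤ s, p i = x} ∧
      {y | ∃ j ≤ n, (ρ j).2 = y} = {y | ∃ i ≤ t, q i = y} := by
  refine ⟨s + t, fun j => (p (min j s), q (j - s)), ?_, ?_, ?_⟩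
  · refine ⟨?_, ?_, ?_, ?_⟩
    · simp [hp0, hq0]
    · simp [hps, hqt]
    · intro j hj
      constructor
      · simp only
        rcases lt_or_ge j s with h | h
        · have h1 : min j s = j := by omega
          have h2 : min (j + 1) s = j + 1 := by omega
          rw [h1, h2]; exact le_of_lt (hpmono j h)
        · have h1 : min j s = s := by omega
          have h2 : min (j + 1) s = s := by omega
          rw [h1, h2]
      · simp only
        rcases lt_or_ge j s with h | h
        · have h1 : j - s = 0 := by omega
          have h2 : j + 1 - s = 0 := by omega
          rw [h1, h2]
        · have h2 : j + 1 - s = (j - s) + 1 := by omega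
          rw [h2]
          exact le_of_lt (hqmono (j - s) (by omega))
    · have key : ∀ i ≤ s + t, ∀ j ≤ s + t, i < j →
          (p (min i s), q (i - s)) ≠ (p (min j s), q (j - s)) := by
        intro i _ j hj hij hne
        rcases le_or_gt j s with h | h
        · have : p (min i s) < p (min j s) := by
            have h1 : min i s = i := by omega
            have h2 : min j s = j := by omega
            rw [h1, h2]; exact strict_chain hpmono j h i hij
          exact absurd (congrArg Prod.fst hne) this.ne
        · have : q (i - s) < q (j - s) := by
            exact strict_chain hqmono (j - s) (by omega) (i - s) (by omega)
          exact absurd (congrArg Prod.snd hne) this.ne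
      intro i hi j hj hij
      rcases Nat.lt_or_ge i j with h | h
      · exact key i hi j hj h
      · have h' : j < i := by omega
        exact fun heq => key j hj i hi h' heq.symm
  · ext x
    simp only [Set.mem_setOf_eq]
    constructor
    · rintro ⟨j, _, rfl⟩
      exact ⟨min j s, by omega, rfl⟩
    · rintro ⟨i, hi, rfl⟩
      exact ⟨i, by omega, by rw [min_eq_left hi]⟩
  · ext y
    simp only [Set.mem_setOf_eq]
    constructor
    · rintro ⟨j, hj, rfl⟩
      exact ⟨j - s, by omega, rfl⟩
    · rintro ⟨i, hi, rfl⟩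
      exact ⟨i + s, by omega, by rw [Nat.add_sub_cancel]⟩
end

section
/- Let F : [α, β]_𝕜 → 𝕂 be a hyperbolic function of the form F(x₁e₁ + x₂e₂) = F₁(x₁)e₁ + F₂(x₂)e₂. Then the set of variation sums of F over all strong partitions of [α, β]_𝕜 equals the set {V₁e₁ + V₂e₂}, where V₁ ranges over all variation sums of F₁ over partitions of [a₁, b₁] and V₂ ranges over all variation sums of F₂ over partitions of [a₂, b₂]. -/
/-- The set of hyperbolic variation sums `∑_j |F(ρ_{j+1}) - F(ρ_j)|_𝕜` of `F`
over all strong partitions of `[α, β]_𝕜`. -/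
def hVarSums (F : ℝ × ℝ → ℝ × ℝ) (α β : ℝ × ℝ) : Set (ℝ × ℝ) :=
  {v | ∃ (n : ℕ) (ρ : ℕ → ℝ × ℝ), IsStrongPartition ρ n α β ∧
    v = ∑ j ∈ Finset.range n,
      (|(F (ρ (j + 1))).1 - (F (ρ j)).1|, |(F (ρ (j + 1))).2 - (F (ρ j)).2|)}

/-- The set of variation sums `∑_j |g(p_{j+1}) - g(p_j)|` of a real function
`g` over all partitions `{p₀ < ⋯ < p_m}` of `[a, b]`. -/
def realVarSums (g : ℝ → ℝ) (a b : ℝ) : Set ℝ :=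
  {v | ∃ (m : ℕ) (p : ℕ → ℝ), p 0 = a ∧ p m = b ∧ (∀ i < m, p i < p (i + 1)) ∧
    v = ∑ i ∈ Finset.range m, |g (p (i + 1)) - g (p i)|}

lemma chain_lt (p : ℕ → ℝ) (m : ℕ) (h : ∀ i < m, p i < p (i + 1)) :
    ∀ i j, i < j → j ≤ m → p i < p j := by
  intro i j
  induction j with
  | zero => omega
  | succ j ih =>
    intro hij hjm
    rcases Nat.lt_succ_iff_lt_or_eq.mp hij with h' | h'
    · exact lt_trans (ih h' (by omega)) (h j (by omega))
    · subst h'; exact h i (by omega)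

lemma key_mem (g : ℝ → ℝ) (n : ℕ) (x : ℕ → ℝ) (hmono : ∀ j < n, x j ≤ x (j + 1)) :
    (∑ j ∈ Finset.range n, |g (x (j + 1)) - g (x j)|) ∈ realVarSums g (x 0) (x n) := by
  induction n with
  | zero => exact ⟨0, fun _ => x 0, rfl, rfl, by omega, by simp⟩
  | succ n ih =>
    obtain ⟨m, p, hp0, hpm, hstrict, hsum⟩ := ih (fun j hj => hmono j (by omega))
    rcases eq_or_lt_of_le (hmono n (by omega)) with heq | hlt
    · refine ⟨m, p, hp0, hpm.trans heq, hstrict, ?_⟩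
      rw [Finset.sum_range_succ, ← heq]
      simp [hsum]
    · refine ⟨m + 1, fun i => if i ≤ m then p i else x (n + 1), ?_, ?_, ?_, ?_⟩
      · simp [hp0]
      · simp
      · intro i hi
        by_cases h' : i < m
        · simp only [if_pos (le_of_lt h'), if_pos (Nat.succ_le_of_lt h')]
          exact hstrict i h'
        · have : i = m := by omega
          subst this
          simp only [le_refl, if_pos, if_neg (by omega : ¬ i + 1 ≤ i)]
          exact hpm ▸ hlt
      · rw [Finset.sum_range_succ, hsum, Finset.sum_range_succ]
        congr 1
        · refine Finset.sum_congr rfl (fun i hi => ?_)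
          have hi' := Finset.mem_range.mp hi
          beta_reduce
          rw [if_pos (by omega : i ≤ m), if_pos (by omega : i + 1 ≤ m)]
        · beta_reduce
          rw [if_pos (le_refl m), if_neg (by omega : ¬ m + 1 ≤ m), hpm]

/-- For `F(x₁e₁ + x₂e₂) = F₁(x₁)e₁ + F₂(x₂)e₂`, the set of hyperbolic
variation sums over strong partitions of `[α, β]_𝕜` equals the set of pairs
`(V₁, V₂)` of variation sums of `F₁` over `[a₁, b₁]` and `F₂` over `[a₂, b₂]`. -/
theorem hVarSums_eq_prod (a₁ b₁ a₂ b₂ : ℝ) (ha : a₁ ≤ b₁) (hb : a₂ ≤ b₂)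
    (F₁ F₂ : ℝ → ℝ) (F : ℝ × ℝ → ℝ × ℝ)
    (hF : ∀ ξ : ℝ × ℝ, F ξ = (F₁ ξ.1, F₂ ξ.2)) :
    hVarSums F (a₁, a₂) (b₁, b₂) =
      {v | v.1 ∈ realVarSums F₁ a₁ b₁ ∧ v.2 ∈ realVarSums F₂ a₂ b₂} := by
  ext v
  constructor
  · rintro ⟨n, ρ, ⟨h0, hn, hmono, -⟩, hv⟩
    constructor
    · have hv1 : v.1 = ∑ j ∈ Finset.range n, |F₁ ((ρ (j + 1)).1) - F₁ ((ρ j).1)| := by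
        rw [hv, Prod.fst_sum]
        exact Finset.sum_congr rfl (fun j _ => by simp [hF])
      rw [hv1]
      have := key_mem F₁ n (fun j => (ρ j).1) (fun j hj => (hmono j hj).1)
      simpa [h0, hn] using this
    · have hv2 : v.2 = ∑ j ∈ Finset.range n, |F₂ ((ρ (j + 1)).2) - F₂ ((ρ j).2)| := by
        rw [hv, Prod.snd_sum]
        exact Finset.sum_congr rfl (fun j _ => by simp [hF])
      rw [hv2]
      have := key_mem F₂ n (fun j => (ρ j).2) (fun j hj => (hmono j hj).2)
      simpa [h0, hn] using this
  · rintro ⟨⟨m₁, p, hp0, hpm, hp, hv1⟩, ⟨m₂, q, hq0, hqm, hq, hv2⟩⟩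
    refine ⟨m₁ + m₂, fun j => (p (min j m₁), q (j - m₁)), ⟨?_, ?_, ?_, ?_⟩, ?_⟩
    · simp [hp0, hq0]
    · simp [hpm, hqm, min_eq_right (Nat.le_add_right m₁ m₂)]
    · intro j hj
      refine ⟨?_, ?_⟩ <;> dsimp only
      · by_cases hjm : j < m₁
        · simp only [min_eq_left (le_of_lt hjm), min_eq_left (by omega : j + 1 ≤ m₁)]
          exact le_of_lt (hp j hjm)
        · simp only [min_eq_right (by omega : m₁ ≤ j), min_eq_right (by omega : m₁ ≤ j + 1)]
          exact le_rfl
      · by_cases hjm : j < m₁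
        · simp only [Nat.sub_eq_zero_of_le (le_of_lt hjm), Nat.sub_eq_zero_of_le (by omega : j + 1 ≤ m₁)]
          exact le_refl _
        · have h1 : j + 1 - m₁ = (j - m₁) + 1 := by omega
          rw [h1]
          exact le_of_lt (hq (j - m₁) (by omega))
    · have H : ∀ i j : ℕ, i < j → j ≤ m₁ + m₂ →
          ((p (min i m₁), q (i - m₁)) : ℝ × ℝ) ≠ (p (min j m₁), q (j - m₁)) := by
        intro i j hij hjm heq
        have h1 : p (min i m₁) = p (min j m₁) := congrArg Prod.fst heq
        have h2 : q (i - m₁) = q (j - m₁) := congrArg Prod.snd heq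
        by_cases him : i < m₁
        · have : p i < p (min j m₁) := chain_lt p m₁ hp i (min j m₁) (by omega) (by omega)
          rw [min_eq_left (le_of_lt him)] at h1
          exact absurd h1 (ne_of_lt this)
        · have : q (i - m₁) < q (j - m₁) := chain_lt q m₂ hq _ _ (by omega) (by omega)
          exact absurd h2 (ne_of_lt this)
      intro i hi j hj hne
      rcases hne.lt_or_gt with h | h
      · exact H i j h hj
      · exact (H j i h hi).symm
    · have key1 : ∀ j, (F (p (min j m₁), q (j - m₁))).1 = F₁ (p (min j m₁)) := fun j => by simp [hF]
      have key2 : ∀ j, (F (p (min j m₁), q (j - m₁))).2 = F₂ (q (j - m₁)) := fun j => by simp [hF]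
      refine Prod.ext ?_ ?_
      · rw [Prod.fst_sum]
        simp only [key1]
        rw [Finset.sum_range_add]
        have e1 : ∑ j ∈ Finset.range m₁, |F₁ (p (min (j + 1) m₁)) - F₁ (p (min j m₁))| =
            ∑ j ∈ Finset.range m₁, |F₁ (p (j + 1)) - F₁ (p j)| := by
          refine Finset.sum_congr rfl (fun j hj => ?_)
          have hj' := Finset.mem_range.mp hj
          rw [min_eq_left (le_of_lt hj'), min_eq_left (by omega : j + 1 ≤ m₁)]
        have e2 : ∑ i ∈ Finset.range m₂,
            |F₁ (p (min (m₁ + i + 1) m₁)) - F₁ (p (min (m₁ + i) m₁))| = 0 := by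
          refine Finset.sum_eq_zero (fun i _ => ?_)
          rw [min_eq_right (by omega : m₁ ≤ m₁ + i + 1), min_eq_right (by omega : m₁ ≤ m₁ + i)]
          simp
        rw [e1, e2, add_zero, hv1]
      · rw [Prod.snd_sum]
        simp only [key2]
        rw [Finset.sum_range_add]
        have e1 : ∑ j ∈ Finset.range m₁, |F₂ (q (j + 1 - m₁)) - F₂ (q (j - m₁))| = 0 := by
          refine Finset.sum_eq_zero (fun j hj => ?_)
          have hj' := Finset.mem_range.mp hj
          rw [Nat.sub_eq_zero_of_le (by omega : j + 1 ≤ m₁), Nat.sub_eq_zero_of_le (le_of_lt hj')]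
          simp
        have e2 : ∑ i ∈ Finset.range m₂, |F₂ (q (m₁ + i + 1 - m₁)) - F₂ (q (m₁ + i - m₁))| =
            ∑ i ∈ Finset.range m₂, |F₂ (q (i + 1)) - F₂ (q i)| := by
          refine Finset.sum_congr rfl (fun i _ => ?_)
          rw [show m₁ + i + 1 - m₁ = i + 1 from by omega, show m₁ + i - m₁ = i from by omega]
        rw [e1, e2, zero_add, hv2]
end

section
/- If F(x₁e₁ + x₂e₂) = F₁(x₁)e₁ + F₂(x₂)e₂ is a hyperbolic function of bounded variation on [α, β]_𝕜, then its total variation satisfies 𝒱(F) = V(F₁)e₁ + V(F₂)e₂, where V(F₁), V(F₂) are the real total variations of F₁ on [a₁, b₁] and F₂ on [a₂, b₂]. -/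
lemma strictAux {p : ℕ → ℝ} {m : ℕ} (h : ∀ i < m, p i < p (i + 1)) :
    ∀ j ≤ m, ∀ i < j, p i < p j := by
  intro j
  induction j with
  | zero => intro _ i hi; omega
  | succ k ih =>
    intro hk i hi
    rcases Nat.lt_succ_iff_lt_or_eq.mp hi with h' | h'
    · exact (ih (by omega) i h').trans (h k (by omega))
    · subst h'; exact h i (by omega)

lemma mono_sum_mem (g : ℝ → ℝ) :
    ∀ (n : ℕ) (p : ℕ → ℝ) (a b : ℝ), p 0 = a → p n = b →
      (∀ j < n, p j ≤ p (j + 1)) →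
      (∑ j ∈ Finset.range n, |g (p (j + 1)) - g (p j)|) ∈ realVarSums g a b := by
  intro n
  induction n with
  | zero =>
    intro p a b h0 hn _
    exact ⟨0, p, h0, hn, fun i hi => absurd hi (by omega), by simp⟩
  | succ n ih =>
    intro p a b h0 hn hm
    rcases eq_or_lt_of_le (hm 0 (by omega)) with he | hl
    · have H := ih (fun j => p (j + 1)) a b (by simp [← he, h0]) hn
        (fun j hj => hm (j + 1) (by omega))
      rw [Finset.sum_range_succ', ← he, sub_self, abs_zero, add_zero]
      exact H
    · obtain ⟨m, r, hr0, hrm, hrs, hrv⟩ :=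
        ih (fun j => p (j + 1)) (p 1) b rfl hn (fun j hj => hm (j + 1) (by omega))
      refine ⟨m + 1, fun i => if i = 0 then a else r (i - 1), by simp, by simp [hrm], ?_, ?_⟩
      · intro i hi
        cases i with
        | zero => simpa [hr0] using (h0 ▸ hl)
        | succ k =>
          simp only [Nat.succ_ne_zero, if_false, Nat.succ_sub_one]
          exact hrs k (by omega)
      · rw [Finset.sum_range_succ', Finset.sum_range_succ']
        simp only [Nat.succ_ne_zero, if_false, Nat.succ_sub_one, if_true, reduceIte]
        rw [hrv]
        simp [hr0, h0]

lemma realVarSums_nonneg {g : ℝ → ℝ} {a b v : ℝ} (hv : v ∈ realVarSums g a b) : 0 ≤ v := by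
  obtain ⟨m, p, _, _, _, rfl⟩ := hv
  exact Finset.sum_nonneg fun i _ => abs_nonneg _

lemma realVarSums_nonempty (g : ℝ → ℝ) {a b : ℝ} (hab : a ≤ b) :
    (realVarSums g a b).Nonempty := by
  rcases eq_or_lt_of_le hab with he | hl
  · exact ⟨0, 0, fun _ => a, rfl, he ▸ rfl, fun i hi => absurd hi (by omega), by simp⟩
  · refine ⟨_, 1, fun i => if i = 0 then a else b, by simp, by simp, ?_, rfl⟩
    intro i hi
    interval_cases i
    simpa using hl

/-- For a hyperbolic function of bounded variation
`F(x₁e₁ + x₂e₂) = F₁(x₁)e₁ + F₂(x₂)e₂` on `[α, β]_𝕜`, the hyperbolic total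
variation (the hyperbolic supremum, taken componentwise, of the set of
variation sums over strong partitions) is `V(F₁)e₁ + V(F₂)e₂`, where `V(Fᵢ)`
are the classical total variations. -/
theorem hyperbolic_total_variation_eq (a₁ b₁ a₂ b₂ : ℝ) (ha : a₁ ≤ b₁)
    (hb : a₂ ≤ b₂) (F₁ F₂ : ℝ → ℝ) (F : ℝ × ℝ → ℝ × ℝ)
    (hF : ∀ ξ : ℝ × ℝ, F ξ = (F₁ ξ.1, F₂ ξ.2))
    (hBV₁ : BddAbove (realVarSums F₁ a₁ b₁))
    (hBV₂ : BddAbove (realVarSums F₂ a₂ b₂)) :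
    (sSup ((fun v : ℝ × ℝ => v.1) '' hVarSums F (a₁, a₂) (b₁, b₂)),
      sSup ((fun v : ℝ × ℝ => v.2) '' hVarSums F (a₁, a₂) (b₁, b₂))) =
    (sSup (realVarSums F₁ a₁ b₁), sSup (realVarSums F₂ a₂ b₂)) := by
  have hS1 : (fun v : ℝ × ℝ => v.1) '' hVarSums F (a₁, a₂) (b₁, b₂) ⊆
      realVarSums F₁ a₁ b₁ := by
    rintro v ⟨w, ⟨n, ρ, ⟨h0, hn, hchain, _⟩, rfl⟩, rfl⟩
    simp only [Prod.fst_sum]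
    have : ∀ j ∈ Finset.range n,
        |(F (ρ (j + 1))).1 - (F (ρ j)).1| = |F₁ ((ρ (j + 1)).1) - F₁ ((ρ j).1)| := by
      intro j _; rw [hF, hF]
    rw [Finset.sum_congr rfl this]
    exact mono_sum_mem F₁ n (fun j => (ρ j).1) a₁ b₁ (by simp [h0]) (by simp [hn])
      (fun j hj => (hchain j hj).1)
  have hS2 : (fun v : ℝ × ℝ => v.2) '' hVarSums F (a₁, a₂) (b₁, b₂) ⊆
      realVarSums F₂ a₂ b₂ := by
    rintro v ⟨w, ⟨n, ρ, ⟨h0, hn, hchain, _⟩, rfl⟩, rfl⟩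
    simp only [Prod.snd_sum]
    have : ∀ j ∈ Finset.range n,
        |(F (ρ (j + 1))).2 - (F (ρ j)).2| = |F₂ ((ρ (j + 1)).2) - F₂ ((ρ j).2)| := by
      intro j _; rw [hF, hF]
    rw [Finset.sum_congr rfl this]
    exact mono_sum_mem F₂ n (fun j => (ρ j).2) a₂ b₂ (by simp [h0]) (by simp [hn])
      (fun j hj => (hchain j hj).2)
  have hNE : (hVarSums F (a₁, a₂) (b₁, b₂)).Nonempty := by
    by_cases hab : ((a₁, a₂) : ℝ × ℝ) = (b₁, b₂)
    · exact ⟨_, 0, fun _ => (a₁, a₂),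
        ⟨rfl, hab, fun j hj => absurd hj (by omega),
          fun i hi j hj hij => absurd (by omega : i = j) hij⟩, rfl⟩
    · refine ⟨_, 1, fun i => if i = 0 then (a₁, a₂) else (b₁, b₂), ⟨rfl, by norm_num, ?_, ?_⟩, rfl⟩
      · intro j hj; interval_cases j; simpa [hle] using ⟨ha, hb⟩
      · intro i hi j hj hij
        interval_cases i <;> interval_cases j
        · exact absurd rfl hij
        · simpa using hab
        · simpa using Ne.symm hab
        · exact absurd rfl hij
  simp only [Prod.mk.injEq]
  constructor
  · apply le_antisymm
    · exact csSup_le_csSup hBV₁ (hNE.image _) hS1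
    · refine csSup_le (realVarSums_nonempty F₁ ha) ?_
      rintro v ⟨m, p, h0, hm, hs, rfl⟩
      rcases Nat.eq_zero_or_pos m with hm0 | hm0
      · subst hm0
        simp only [Finset.range_zero, Finset.sum_empty]
        obtain ⟨x, hx⟩ := hNE
        exact le_trans (realVarSums_nonneg (hS1 ⟨x, hx, rfl⟩))
          (le_csSup (hBV₁.mono hS1) ⟨x, hx, rfl⟩)
      · set ρ : ℕ → ℝ × ℝ := fun j => (p j, if j < m then a₂ else b₂) with hρ
        have hmem : (∑ j ∈ Finset.range m,
            ((|(F (ρ (j + 1))).1 - (F (ρ j)).1|,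
              |(F (ρ (j + 1))).2 - (F (ρ j)).2|) : ℝ × ℝ))
            ∈ hVarSums F (a₁, a₂) (b₁, b₂) := by
          refine ⟨m, ρ, ⟨by simp [hρ, h0, hm0], by simp [hρ, hm], ?_, ?_⟩, rfl⟩
          · intro j hj
            refine ⟨(hs j hj).le, ?_⟩
            simp only [hρ, if_pos hj]
            split_ifs with h
            · exact le_refl _
            · exact hb
          · intro i hi j hj hij heq
            have hpij : p i = p j := congrArg Prod.fst heq
            rcases hij.lt_or_gt with hlt | hlt
            · exact absurd hpij (strictAux hs j hj i hlt).ne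
            · exact absurd hpij (strictAux hs i hi j hlt).ne'
        apply le_csSup (hBV₁.mono hS1)
        refine ⟨_, hmem, ?_⟩
        simp only [Prod.fst_sum]
        refine Finset.sum_congr rfl fun j _ => ?_
        rw [hF, hF]
  · apply le_antisymm
    · exact csSup_le_csSup hBV₂ (hNE.image _) hS2
    · refine csSup_le (realVarSums_nonempty F₂ hb) ?_
      rintro v ⟨m, p, h0, hm, hs, rfl⟩
      rcases Nat.eq_zero_or_pos m with hm0 | hm0
      · subst hm0
        simp only [Finset.range_zero, Finset.sum_empty]
        obtain ⟨x, hx⟩ := hNE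
        exact le_trans (realVarSums_nonneg (hS2 ⟨x, hx, rfl⟩))
          (le_csSup (hBV₂.mono hS2) ⟨x, hx, rfl⟩)
      · set ρ : ℕ → ℝ × ℝ := fun j => (if j < m then a₁ else b₁, p j) with hρ
        have hmem : (∑ j ∈ Finset.range m,
            ((|(F (ρ (j + 1))).1 - (F (ρ j)).1|,
              |(F (ρ (j + 1))).2 - (F (ρ j)).2|) : ℝ × ℝ))
            ∈ hVarSums F (a₁, a₂) (b₁, b₂) := by
          refine ⟨m, ρ, ⟨by simp [hρ, h0, hm0], by simp [hρ, hm], ?_, ?_⟩, rfl⟩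
          · intro j hj
            refine ⟨?_, (hs j hj).le⟩
            simp only [hρ, if_pos hj]
            split_ifs with h
            · exact le_refl _
            · exact ha
          · intro i hi j hj hij heq
            have hpij : p i = p j := congrArg Prod.snd heq
            rcases hij.lt_or_gt with hlt | hlt
            · exact absurd hpij (strictAux hs j hj i hlt).ne
            · exact absurd hpij (strictAux hs i hi j hlt).ne'
        apply le_csSup (hBV₂.mono hS2)
        refine ⟨_, hmem, ?_⟩
        simp only [Prod.snd_sum]
        refine Finset.sum_congr rfl fun j _ => ?_
        rw [hF, hF]
end

section
/- Let F(x₁e₁ + x₂e₂) = F₁(x₁)e₁ + F₂(x₂)e₂ on [α, β]_𝕜 and G(x₁e₁ + x₂e₂) = G₁(x₁)e₁ + G₂(x₂)e₂. Then F is hyperbolic Riemann–Stieltjes integrable with respect to G if and only if F₁ is Riemann–Stieltjes integrable with respect to G₁ on [a₁, b₁] and F₂ with respect to G₂ on [a₂, b₂]; in that case ∫_α^β F d_𝕜G = (∫_{a₁}^{b₁} F₁ dG₁)e₁ + (∫_{a₂}^{b₂} F₂ dG₂)e₂. -/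
/-- The hyperbolic Riemann–Stieltjes sum
`∑_j F(γ_j) |G(ρ_{j+1}) - G(ρ_j)|_𝕜` over a tagged strong partition. -/
def hRSSum (F G : ℝ × ℝ → ℝ × ℝ) (n : ℕ) (ρ γ : ℕ → ℝ × ℝ) : ℝ × ℝ :=
  ∑ j ∈ Finset.range n, F (γ j) *
    (|(G (ρ (j + 1))).1 - (G (ρ j)).1|, |(G (ρ (j + 1))).2 - (G (ρ j)).2|)

/-- `𝓘` is the hyperbolic Riemann–Stieltjes integral `∫_α^β F d_𝕜 G`: for
every hyperbolic `ε ≻ 0` there is `δ ≻ 0` such that every strong partition of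
`[α, β]_𝕜` of hyperbolic diameter `≺ δ`, with any choice of tags
`γ_j ∈ [ρ_j, ρ_{j+1}]_𝕜`, has Riemann–Stieltjes sum within `ε` of `𝓘` in
hyperbolic modulus. -/
def HasHRSIntegral (F G : ℝ × ℝ → ℝ × ℝ) (α β 𝓘 : ℝ × ℝ) : Prop :=
  ∀ ε : ℝ × ℝ, 0 < ε.1 → 0 < ε.2 → ∃ δ : ℝ × ℝ, 0 < δ.1 ∧ 0 < δ.2 ∧
    ∀ (n : ℕ) (ρ γ : ℕ → ℝ × ℝ), IsStrongPartition ρ n α β →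
      (∀ j < n, (ρ (j + 1)).1 - (ρ j).1 < δ.1 ∧ (ρ (j + 1)).2 - (ρ j).2 < δ.2) →
      (∀ j < n, hle (ρ j) (γ j) ∧ hle (γ j) (ρ (j + 1))) →
      |(hRSSum F G n ρ γ).1 - 𝓘.1| < ε.1 ∧ |(hRSSum F G n ρ γ).2 - 𝓘.2| < ε.2

/-- `I` is the (componentwise) real Riemann–Stieltjes integral `∫_a^b f d g`
in the sense used for the idempotent components of the hyperbolic one, i.e.
with sums `∑_i f(c_i) |g(p_{i+1}) - g(p_i)|` over tagged partitions. -/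
def HasRealRSIntegral (f g : ℝ → ℝ) (a b I : ℝ) : Prop :=
  ∀ ε > (0 : ℝ), ∃ δ > (0 : ℝ), ∀ (m : ℕ) (p c : ℕ → ℝ),
    p 0 = a → p m = b → (∀ i < m, p i < p (i + 1)) →
    (∀ i < m, p (i + 1) - p i < δ) →
    (∀ i < m, c i ∈ Set.Icc (p i) (p (i + 1))) →
    |∑ i ∈ Finset.range m, f (c i) * |g (p (i + 1)) - g (p i)| - I| < ε

open Finset

def rsSum (f g : ℝ → ℝ) (m : ℕ) (p c : ℕ → ℝ) : ℝ :=
  ∑ i ∈ range m, f (c i) * |g (p (i + 1)) - g (p i)|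

def IsTaggedPartition (p c : ℕ → ℝ) (m : ℕ) (a b δ : ℝ) : Prop :=
  p 0 = a ∧ p m = b ∧ (∀ i < m, p i < p (i + 1)) ∧ (∀ i < m, p (i + 1) - p i < δ) ∧
    ∀ i < m, c i ∈ Set.Icc (p i) (p (i + 1))

theorem hasRealRSIntegral_iff {f g : ℝ → ℝ} {a b I : ℝ} :
    HasRealRSIntegral f g a b I ↔ ∀ ε > 0, ∃ δ > 0, ∀ m p c,
      IsTaggedPartition p c m a b δ → |rsSum f g m p c - I| < ε := by
  simp only [HasRealRSIntegral, IsTaggedPartition, rsSum, and_imp]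

theorem IsTaggedPartition.mono {p c : ℕ → ℝ} {m : ℕ} {a b δ δ' : ℝ}
    (h : IsTaggedPartition p c m a b δ) (hδ : δ ≤ δ') : IsTaggedPartition p c m a b δ' :=
  ⟨h.1, h.2.1, h.2.2.1, fun i hi => (h.2.2.2.1 i hi).trans_le hδ, h.2.2.2.2⟩

theorem exists_isTaggedPartition {a b δ : ℝ} (hab : a < b) (hδ : 0 < δ) :
    ∃ m p, IsTaggedPartition p p m a b δ := by
  obtain ⟨m, hm⟩ := exists_nat_gt ((b - a) / δ)
  have hm0 : (0 : ℝ) < m := (div_pos (sub_pos.2 hab) hδ).trans hm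
  have hstep : 0 < (b - a) / m := div_pos (sub_pos.2 hab) hm0
  have hmesh : (b - a) / m < δ := by
    rwa [div_lt_iff₀ hm0, mul_comm, ← div_lt_iff₀ hδ]
  have hsucc (i : ℕ) :
      a + (i + 1 : ℕ) * ((b - a) / m) = a + i * ((b - a) / m) + (b - a) / m := by
    push_cast; ring
  refine ⟨m, fun i => a + i * ((b - a) / m), by simp, by field_simp; ring, fun i _ => ?_,
    fun i _ => ?_, fun i _ => ⟨le_rfl, ?_⟩⟩ <;> simp only [hsucc] <;> linarith

theorem HasRealRSIntegral.unique {f g : ℝ → ℝ} {a b I I' : ℝ} (hab : a < b)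
    (h : HasRealRSIntegral f g a b I) (h' : HasRealRSIntegral f g a b I') : I = I' := by
  rw [hasRealRSIntegral_iff] at h h'
  refine eq_of_forall_dist_le fun ε hε => ?_
  obtain ⟨δ, hδ, H⟩ := h (ε / 2) (half_pos hε)
  obtain ⟨δ', hδ', H'⟩ := h' (ε / 2) (half_pos hε)
  obtain ⟨m, p, hp⟩ := exists_isTaggedPartition hab (lt_min hδ hδ')
  have hI := H m p p (hp.mono (min_le_left δ δ'))
  have hI' := H' m p p (hp.mono (min_le_right δ δ'))
  rw [Real.dist_eq]
  linarith [abs_sub_le I (rsSum f g m p p) I', abs_sub_comm I (rsSum f g m p p)]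

def Nat.succAbove (i j : ℕ) : ℕ := if j < i then j else j + 1

theorem sum_range_comp_succAbove {M : Type*} [AddCommMonoid M] (f : ℕ → M) {i m : ℕ}
    (hi : i ≤ m) (h : f i = 0) : ∑ j ∈ range m, f (i.succAbove j) = ∑ j ∈ range (m + 1), f j := by
  induction m, hi using Nat.le_induction with
  | base =>
    rw [sum_range_succ, h, add_zero]
    exact sum_congr rfl fun j hj => by simp [Nat.succAbove, mem_range.1 hj]
  | succ m hm ih =>
    rw [sum_range_succ, ih, sum_range_succ _ (m + 1), Nat.succAbove, if_neg (by omega)]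

theorem comp_succAbove_add_one {p : ℕ → ℝ} {i : ℕ} (hrep : p (i + 1) = p i) (j : ℕ) :
    p (i.succAbove (j + 1)) = p (i.succAbove j + 1) := by
  unfold Nat.succAbove
  split_ifs
  · rfl
  · omega
  · rw [show j + 1 = i by omega, hrep]
  · rfl

theorem rsSum_comp_succAbove (f g : ℝ → ℝ) {p : ℕ → ℝ} (c : ℕ → ℝ) {i m : ℕ}
    (hrep : p (i + 1) = p i) (hi : i ≤ m) :
    rsSum f g m (p ∘ i.succAbove) (c ∘ i.succAbove) = rsSum f g (m + 1) p c := by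
  simp only [rsSum, Function.comp_apply, comp_succAbove_add_one hrep]
  exact sum_range_comp_succAbove (fun j => f (c j) * |g (p (j + 1)) - g (p j)|) hi
    (by simp [hrep])

theorem exists_isTaggedPartition_rsSum_eq (f g : ℝ → ℝ) {a b δ : ℝ} :
    ∀ {m : ℕ} {p c : ℕ → ℝ}, p 0 = a → p m = b → (∀ i < m, p i ≤ p (i + 1)) →
      (∀ i < m, p (i + 1) - p i < δ) → (∀ i < m, c i ∈ Set.Icc (p i) (p (i + 1))) →
      ∃ m' p' c', IsTaggedPartition p' c' m' a b δ ∧ rsSum f g m' p' c' = rsSum f g m p c := by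
  intro m
  induction m with
  | zero =>
    intro p c h0 hm _ _ _
    exact ⟨0, p, c, ⟨h0, hm, by simp, by simp, by simp⟩, rfl⟩
  | succ m ih =>
    intro p c h0 hm hmono hmesh htag
    by_cases hstrict : ∀ i < m + 1, p i < p (i + 1)
    · exact ⟨_, p, c, ⟨h0, hm, hstrict, hmesh, htag⟩, rfl⟩
    push Not at hstrict
    obtain ⟨i, hi, hle⟩ := hstrict
    have hrep : p (i + 1) = p i := le_antisymm hle (hmono i hi)
    have hlt : ∀ j < m, i.succAbove j < m + 1 := fun j hj => by
      unfold Nat.succAbove; split_ifs <;> omega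
    obtain ⟨m', p', c', hpart, hsum⟩ := ih (p := p ∘ i.succAbove) (c := c ∘ i.succAbove)
      (by rcases Nat.eq_zero_or_pos i with rfl | hpos <;> simp_all [Nat.succAbove])
      (by rw [Function.comp_apply, Nat.succAbove, if_neg (by omega), hm])
      (fun j hj => by
        simpa only [Function.comp_apply, comp_succAbove_add_one hrep] using hmono _ (hlt j hj))
      (fun j hj => by
        simpa only [Function.comp_apply, comp_succAbove_add_one hrep] using hmesh _ (hlt j hj))
      (fun j hj => by
        simpa only [Function.comp_apply, comp_succAbove_add_one hrep] using htag _ (hlt j hj))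
    exact ⟨m', p', c', hpart, hsum.trans (rsSum_comp_succAbove f g c hrep (by omega))⟩

/-- The L-shaped path through `p` at height `q 0`, then through `q` at abscissa `p m`
(`min` and truncated subtraction freeze one coordinate on each leg). -/
def lPath (p q : ℕ → ℝ) (m j : ℕ) : ℝ × ℝ := (p (min j m), q (j - m))

def lTags (p q c d : ℕ → ℝ) (m j : ℕ) : ℝ × ℝ :=
  (if j < m then c j else p m, if j < m then q 0 else d (j - m))

section LPath

variable {p q c d : ℕ → ℝ} {m k : ℕ} {a₁ b₁ a₂ b₂ δ₁ δ₂ : ℝ}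

theorem isStrongPartition_lPath (hp : IsTaggedPartition p c m a₁ b₁ δ₁)
    (hq : IsTaggedPartition q d k a₂ b₂ δ₂) :
    IsStrongPartition (lPath p q m) (m + k) (a₁, a₂) (b₁, b₂) := by
  obtain ⟨hp0, hpm, hpinc, -, -⟩ := hp
  obtain ⟨hq0, hqk, hqinc, -, -⟩ := hq
  have hpmono : StrictMonoOn p (Set.Iic m) := strictMonoOn_Iic_of_lt_succ (by simpa using hpinc)
  have hqmono : StrictMonoOn q (Set.Iic k) := strictMonoOn_Iic_of_lt_succ (by simpa using hqinc)
  refine ⟨by simp [lPath, hp0, hq0], by simp [lPath, hpm, hqk], fun j hj => ⟨?_, ?_⟩,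
    fun i hi j hj hij heq => hij ?_⟩
  · exact hpmono.monotoneOn (Set.mem_Iic.2 (min_le_right _ _)) (Set.mem_Iic.2 (min_le_right _ _))
      (by omega)
  · exact hqmono.monotoneOn (by simp only [Set.mem_Iic]; omega) (by simp only [Set.mem_Iic]; omega)
      (by omega)
  · obtain ⟨h₁, h₂⟩ := Prod.mk.inj heq
    have := hpmono.injOn (Set.mem_Iic.2 (min_le_right _ _)) (Set.mem_Iic.2 (min_le_right _ _)) h₁
    have := hqmono.injOn (by simp only [Set.mem_Iic]; omega) (by simp only [Set.mem_Iic]; omega) h₂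
    omega

theorem lPath_mesh (hp : IsTaggedPartition p c m a₁ b₁ δ₁)
    (hq : IsTaggedPartition q d k a₂ b₂ δ₂) (hδ₁ : 0 < δ₁) (hδ₂ : 0 < δ₂) :
    ∀ j < m + k, (lPath p q m (j + 1)).1 - (lPath p q m j).1 < δ₁ ∧
      (lPath p q m (j + 1)).2 - (lPath p q m j).2 < δ₂ := by
  intro j hj
  simp only [lPath]
  by_cases hjm : j < m
  · rw [min_eq_left hjm.le, min_eq_left hjm, Nat.sub_eq_zero_of_le hjm.le,
      Nat.sub_eq_zero_of_le hjm, sub_self]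
    exact ⟨hp.2.2.2.1 j hjm, hδ₂⟩
  · rw [min_eq_right (by omega), min_eq_right (by omega), sub_self,
      show j + 1 - m = j - m + 1 by omega]
    exact ⟨hδ₁, hq.2.2.2.1 (j - m) (by omega)⟩

theorem lTags_mem (hp : IsTaggedPartition p c m a₁ b₁ δ₁)
    (hq : IsTaggedPartition q d k a₂ b₂ δ₂) :
    ∀ j < m + k, hle (lPath p q m j) (lTags p q c d m j) ∧
      hle (lTags p q c d m j) (lPath p q m (j + 1)) := by
  intro j hj
  simp only [lPath, lTags, hle]
  by_cases hjm : j < m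
  · rw [if_pos hjm, if_pos hjm, min_eq_left hjm.le, min_eq_left hjm,
      Nat.sub_eq_zero_of_le hjm.le, Nat.sub_eq_zero_of_le hjm]
    have hc := hp.2.2.2.2 j hjm
    exact ⟨⟨hc.1, le_rfl⟩, hc.2, le_rfl⟩
  · rw [if_neg hjm, if_neg hjm, min_eq_right (by omega), min_eq_right (by omega),
      show j + 1 - m = j - m + 1 by omega]
    have hd := hq.2.2.2.2 (j - m) (by omega)
    exact ⟨⟨le_rfl, hd.1⟩, le_rfl, hd.2⟩

end LPath

section Componentwise

variable {F₁ F₂ G₁ G₂ : ℝ → ℝ} {F G : ℝ × ℝ → ℝ × ℝ}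
  (hF : ∀ ξ : ℝ × ℝ, F ξ = (F₁ ξ.1, F₂ ξ.2)) (hG : ∀ ξ : ℝ × ℝ, G ξ = (G₁ ξ.1, G₂ ξ.2))
include hF hG

theorem hRSSum_eq_rsSum (n : ℕ) (ρ γ : ℕ → ℝ × ℝ) :
    hRSSum F G n ρ γ = (rsSum F₁ G₁ n (fun j => (ρ j).1) (fun j => (γ j).1),
      rsSum F₂ G₂ n (fun j => (ρ j).2) (fun j => (γ j).2)) := by
  ext <;> simp [hRSSum, rsSum, hF, hG, Prod.fst_sum, Prod.snd_sum]

theorem hRSSum_lPath (p q c d : ℕ → ℝ) (m k : ℕ) :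
    hRSSum F G (m + k) (lPath p q m) (lTags p q c d m) =
      (rsSum F₁ G₁ m p c, rsSum F₂ G₂ k q d) := by
  rw [hRSSum_eq_rsSum hF hG]
  simp only [rsSum, lPath, lTags, sum_range_add]
  congr 1
  · rw [sum_eq_zero (s := range k) fun i _ => by simp [show min (m + i + 1) m = m by omega],
      add_zero]
    exact sum_congr rfl fun j hj => by
      have := mem_range.1 hj
      rw [if_pos this, min_eq_left this.le, min_eq_left this]
  · rw [sum_eq_zero (s := range m) fun i hi => by
      have := mem_range.1 hi
      rw [Nat.sub_eq_zero_of_le this.le, Nat.sub_eq_zero_of_le this]; simp, zero_add]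
    exact sum_congr rfl fun j _ => by simp [add_assoc]

theorem HasHRSIntegral.abs_rsSum_sub_lt {a₁ b₁ a₂ b₂ : ℝ} {𝓘 : ℝ × ℝ}
    (h : HasHRSIntegral F G (a₁, a₂) (b₁, b₂) 𝓘) {ε : ℝ} (hε : 0 < ε) :
    ∃ δ₁ > 0, ∃ δ₂ > 0, ∀ m p c k q d, IsTaggedPartition p c m a₁ b₁ δ₁ →
      IsTaggedPartition q d k a₂ b₂ δ₂ →
        |rsSum F₁ G₁ m p c - 𝓘.1| < ε ∧ |rsSum F₂ G₂ k q d - 𝓘.2| < ε := by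
  obtain ⟨δ, hδ₁, hδ₂, H⟩ := h (ε, ε) hε hε
  refine ⟨δ.1, hδ₁, δ.2, hδ₂, fun m p c k q d hp hq => ?_⟩
  simpa [hRSSum_lPath hF hG] using
    H (m + k) _ _ (isStrongPartition_lPath hp hq) (lPath_mesh hp hq hδ₁ hδ₂) (lTags_mem hp hq)

theorem HasHRSIntegral.hasRealRSIntegral_fst {a₁ b₁ a₂ b₂ : ℝ} {𝓘 : ℝ × ℝ} (hb : a₂ < b₂)
    (h : HasHRSIntegral F G (a₁, a₂) (b₁, b₂) 𝓘) : HasRealRSIntegral F₁ G₁ a₁ b₁ 𝓘.1 := by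
  refine hasRealRSIntegral_iff.2 fun ε hε => ?_
  obtain ⟨δ₁, hδ₁, δ₂, hδ₂, H⟩ := h.abs_rsSum_sub_lt hF hG hε
  obtain ⟨k, q, hq⟩ := exists_isTaggedPartition hb hδ₂
  exact ⟨δ₁, hδ₁, fun m p c hp => (H m p c k q q hp hq).1⟩

theorem HasHRSIntegral.hasRealRSIntegral_snd {a₁ b₁ a₂ b₂ : ℝ} {𝓘 : ℝ × ℝ} (ha : a₁ < b₁)
    (h : HasHRSIntegral F G (a₁, a₂) (b₁, b₂) 𝓘) : HasRealRSIntegral F₂ G₂ a₂ b₂ 𝓘.2 := by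
  refine hasRealRSIntegral_iff.2 fun ε hε => ?_
  obtain ⟨δ₁, hδ₁, δ₂, hδ₂, H⟩ := h.abs_rsSum_sub_lt hF hG hε
  obtain ⟨m, p, hp⟩ := exists_isTaggedPartition ha hδ₁
  exact ⟨δ₂, hδ₂, fun k q d hq => (H m p p k q d hp hq).2⟩

theorem hasHRSIntegral_of_hasRealRSIntegral {a₁ b₁ a₂ b₂ I₁ I₂ : ℝ}
    (h₁ : HasRealRSIntegral F₁ G₁ a₁ b₁ I₁) (h₂ : HasRealRSIntegral F₂ G₂ a₂ b₂ I₂) :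
    HasHRSIntegral F G (a₁, a₂) (b₁, b₂) (I₁, I₂) := by
  rw [hasRealRSIntegral_iff] at h₁ h₂
  intro ε hε₁ hε₂
  obtain ⟨δ₁, hδ₁, H₁⟩ := h₁ ε.1 hε₁
  obtain ⟨δ₂, hδ₂, H₂⟩ := h₂ ε.2 hε₂
  refine ⟨(δ₁, δ₂), hδ₁, hδ₂, fun n ρ γ hρ hmesh htag => ?_⟩
  obtain ⟨h0, hn, hmono, -⟩ := hρ
  rw [hRSSum_eq_rsSum hF hG]
  obtain ⟨m₁, p₁, c₁, hpart₁, hsum₁⟩ := exists_isTaggedPartition_rsSum_eq F₁ G₁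
    (congrArg Prod.fst h0) (congrArg Prod.fst hn) (fun j hj => (hmono j hj).1)
    (fun j hj => (hmesh j hj).1)
    (fun j hj => ⟨(htag j hj).1.1, (htag j hj).2.1⟩)
  obtain ⟨m₂, p₂, c₂, hpart₂, hsum₂⟩ := exists_isTaggedPartition_rsSum_eq F₂ G₂
    (congrArg Prod.snd h0) (congrArg Prod.snd hn) (fun j hj => (hmono j hj).2)
    (fun j hj => (hmesh j hj).2)
    (fun j hj => ⟨(htag j hj).1.2, (htag j hj).2.2⟩)
  exact ⟨hsum₁ ▸ H₁ _ _ _ hpart₁, hsum₂ ▸ H₂ _ _ _ hpart₂⟩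

end Componentwise

/-- For componentwise functions `F = F₁e₁ + F₂e₂` and `G = G₁e₁ + G₂e₂`, `F`
is hyperbolic Riemann–Stieltjes integrable with respect to `G` on `[α, β]_𝕜`
iff `F₁` is integrable w.r.t. `G₁` on `[a₁, b₁]` and `F₂` w.r.t. `G₂` on
`[a₂, b₂]`; in that case `∫_α^β F d_𝕜G = (∫ F₁ dG₁)e₁ + (∫ F₂ dG₂)e₂`. -/
theorem hRS_integrable_iff (a₁ b₁ a₂ b₂ : ℝ) (ha : a₁ < b₁) (hb : a₂ < b₂)
    (F₁ F₂ G₁ G₂ : ℝ → ℝ) (F G : ℝ × ℝ → ℝ × ℝ)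
    (hF : ∀ ξ : ℝ × ℝ, F ξ = (F₁ ξ.1, F₂ ξ.2))
    (hG : ∀ ξ : ℝ × ℝ, G ξ = (G₁ ξ.1, G₂ ξ.2)) :
    ((∃ 𝓘, HasHRSIntegral F G (a₁, a₂) (b₁, b₂) 𝓘) ↔
      (∃ I₁, HasRealRSIntegral F₁ G₁ a₁ b₁ I₁) ∧
        (∃ I₂, HasRealRSIntegral F₂ G₂ a₂ b₂ I₂)) ∧
    ∀ 𝓘 I₁ I₂, HasHRSIntegral F G (a₁, a₂) (b₁, b₂) 𝓘 →
      HasRealRSIntegral F₁ G₁ a₁ b₁ I₁ → HasRealRSIntegral F₂ G₂ a₂ b₂ I₂ →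
      𝓘 = (I₁, I₂) := by
  refine ⟨⟨fun ⟨𝓘, h⟩ => ⟨⟨𝓘.1, h.hasRealRSIntegral_fst hF hG hb⟩,
      ⟨𝓘.2, h.hasRealRSIntegral_snd hF hG ha⟩⟩,
    fun ⟨⟨I₁, h₁⟩, ⟨I₂, h₂⟩⟩ => ⟨(I₁, I₂), hasHRSIntegral_of_hasRealRSIntegral hF hG h₁ h₂⟩⟩, ?_⟩
  intro 𝓘 I₁ I₂ h h₁ h₂
  exact Prod.ext ((h.hasRealRSIntegral_fst hF hG hb).unique ha h₁)
    ((h.hasRealRSIntegral_snd hF hG ha).unique hb h₂)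
end
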